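/- arXiv:1808.01548 — 2 statements merged into one kernel-verified Lean document; each statement's English description precedes it below -/
import Mathlib

section
/- Fix t ≡ 169 (mod 1260) with t ≥ 1429. For 1 ≤ i ≤ (5t−8)/3, the triples of cycle lengths {22t+i, 25t+(t−1)/3+i−1, 28t+(2t−2)/3+2i−2} (from subgraphs B_{22t+i}) and {23t+(2t−2)/3+i, 27t+i−1, 28t+(2t−2)/3+2i−1} (from subgraphs B_{23t+(2t−2)/3+i}) together give 2·(5t−8)/3 triples whose union consists of pairwise distinct integers. -/
/-!
Write `t = 3s + 1` and `N = 5s + 1 = (5t - 2)/3`, so that `i` ranges over `1 ≤ i ≤ N - 2`.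
Shifted down by `22t`, the six families become `i`, `N + i`, `2N + i`, `3N + i + 1`
and `4N + 2i`, `4N + 2i + 1`: the first four lie in the successive disjoint windows
`(kN, (k+1)N)`, the last two lie above `4N` and differ in parity, and each family is
strictly increasing in `i`.
-/

/-- The six cycle lengths of the theta subgraphs `B_{22t+i}` and `B_{23t+(2t-2)/3+i}`. -/
def theta6 (t i : ℤ) : Fin 6 → ℤ :=
  ![22*t+i, 25*t+(t-1)/3+i-1, 28*t+(2*t-2)/3+2*i-2,
    23*t+(2*t-2)/3+i, 27*t+i-1, 28*t+(2*t-2)/3+2*i-1]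

def thetaCode (N i : ℤ) : Fin 6 → ℤ :=
  ![i, 2*N+i, 4*N+2*i, N+i, 3*N+i+1, 4*N+2*i+1]

/-- Index of the window `(kN, (k+1)N)` containing the family; the last two share `k = 4`. -/
def thetaBlock : Fin 6 → ℤ :=
  ![0, 2, 4, 1, 3, 4]

lemma theta6_eq_thetaCode {t : ℤ} (ht : t % 3 = 1) (i : ℤ) (a : Fin 6) :
    theta6 t i a = 22*t + thetaCode ((5*t-2)/3) i a := by
  fin_cases a <;> simp [theta6, thetaCode] <;> omega

section

variable {N i i' : ℤ}

lemma thetaCode_mem_block (hi : 1 ≤ i) (hiN : i ≤ N - 2) (a : Fin 6) :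
    thetaBlock a * N < thetaCode N i a ∧
      (thetaBlock a < 4 → thetaCode N i a < (thetaBlock a + 1) * N) := by
  fin_cases a <;> simp [thetaBlock, thetaCode] <;> omega

lemma thetaCode_lt_of_thetaBlock_lt (hi : 1 ≤ i) (hiN : i ≤ N - 2) (hi' : 1 ≤ i')
    (hiN' : i' ≤ N - 2) {a b : Fin 6} (hab : thetaBlock a < thetaBlock b) :
    thetaCode N i a < thetaCode N i' b := by
  have hN : 0 ≤ N := by omega
  have hb : thetaBlock b ≤ 4 := by fin_cases b <;> simp [thetaBlock]
  calc thetaCode N i a < (thetaBlock a + 1) * N := (thetaCode_mem_block hi hiN a).2 (by omega)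
    _ ≤ thetaBlock b * N := mul_le_mul_of_nonneg_right (by omega) hN
    _ < thetaCode N i' b := (thetaCode_mem_block hi' hiN' b).1

lemma eq_of_thetaCode_eq_of_thetaBlock_eq {a b : Fin 6} (hab : thetaBlock a = thetaBlock b)
    (h : thetaCode N i a = thetaCode N i' b) : i = i' ∧ a = b := by
  fin_cases a <;> fin_cases b <;> simp_all [thetaBlock, thetaCode] <;> omega

lemma eq_of_thetaCode_eq (hi : 1 ≤ i) (hiN : i ≤ N - 2) (hi' : 1 ≤ i') (hiN' : i' ≤ N - 2)
    {a b : Fin 6} (h : thetaCode N i a = thetaCode N i' b) : i = i' ∧ a = b := by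
  rcases lt_trichotomy (thetaBlock a) (thetaBlock b) with hlt | heq | hgt
  · exact absurd h (thetaCode_lt_of_thetaBlock_lt hi hiN hi' hiN' hlt).ne
  · exact eq_of_thetaCode_eq_of_thetaBlock_eq heq h
  · exact absurd h (thetaCode_lt_of_thetaBlock_lt hi' hiN' hi hiN hgt).ne'

end

theorem stmt10_general (t : ℤ) (hmod : t % 1260 = 169) :
    ∀ i i', 1 ≤ i → i ≤ (5*t-8)/3 → 1 ≤ i' → i' ≤ (5*t-8)/3 →
      ∀ a b : Fin 6, theta6 t i a = theta6 t i' b → i = i' ∧ a = b := by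
  intro i i' hi hiN hi' hiN' a b h
  have ht : t % 3 = 1 := by omega
  have hn : (5*t-8)/3 = (5*t-2)/3 - 2 := by omega
  rw [theta6_eq_thetaCode ht, theta6_eq_thetaCode ht, add_right_inj] at h
  exact eq_of_thetaCode_eq hi (hn ▸ hiN) hi' (hn ▸ hiN') h

theorem stmt10 (t : ℤ) (hmod : t % 1260 = 169) (ht : 1429 ≤ t) :
    ∀ i i', 1 ≤ i → i ≤ (5*t-8)/3 → 1 ≤ i' → i' ≤ (5*t-8)/3 →
      ∀ a b : Fin 6, theta6 t i a = theta6 t i' b → i = i' ∧ a = b :=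
  stmt10_general t hmod
end

section
/- Let s₁ > s₂ and s₁ + 3s₂ > k be positive integers, m even, t ≥ 1. Then the cycle lengths from the theta subgraphs, m(s₁t + i), m(s₁t + s₂t + i), m(s₁t + 2s₂t + i) for 1 ≤ i ≤ s₂t, the lengths m·i for the simple cycles B_i with 1 ≤ i ≤ s₁t (together with i in the range covered), and the lengths m·s₁t + 3m·s₂t + m·k·h·t + (h+j−1)m·t + m·i for 1 ≤ i ≤ t, j ≥ 1, h ≥ 0, j + h ≤ k + 1, are all pairwise distinct. -/
/-- All cycle lengths of the graph constructed in the proof of Theorem 5, indexed by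
the subgraph they come from: theta subgraphs (three lengths each), simple cycles,
and the cycles of `B_{s₁t+s₂t+i}` (indexed by pairs `(j,h)` with `j ≥ 1`,
`j + h ≤ k + 1`). -/
def thm5Lengths (m t k s₁ s₂ : ℕ) :
    (({i : ℕ // 1 ≤ i ∧ i ≤ s₂ * t} × Fin 3) ⊕
     {i : ℕ // 1 ≤ i ∧ i ≤ s₁ * t} ⊕
     ({i : ℕ // 1 ≤ i ∧ i ≤ t} × {jh : ℕ × ℕ // 1 ≤ jh.1 ∧ jh.1 + jh.2 ≤ k + 1})) → ℕ :=
  Sum.elim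
    (fun p => ![m * (s₁ * t + p.1.val), m * (s₁ * t + s₂ * t + p.1.val),
                m * (s₁ * t + 2 * s₂ * t + p.1.val)] p.2)
    (Sum.elim
      (fun i => m * i.val)
      (fun p => m * s₁ * t + 3 * m * s₂ * t + m * k * p.2.val.2 * t +
        (p.2.val.2 + p.2.val.1 - 1) * m * t + m * p.1.val))

/-!
Dividing by `m`, the three families of lengths occupy disjoint ranges: the simple cycles give
`1, …, s₁t`, the theta subgraphs give `s₁t + 1, …, s₁t + 3s₂t`, and the cycles of the `B`'s
lie above `s₁t + 3s₂t`. Within a family the reduced length is a mixed-radix numeral in the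
indices (digits `i - 1 < s₂t` and `r < 3` for the theta subgraphs; `i - 1 < t`, `j - 1 < k + 1`
and `h` for the `B`'s), so distinct indices give distinct lengths.
-/

theorem Nat.eq_and_eq_of_mul_add_eq_mul_add {t q₁ q₂ i₁ i₂ : ℕ} (hi₁ : i₁ < t) (hi₂ : i₂ < t)
    (h : q₁ * t + i₁ = q₂ * t + i₂) : q₁ = q₂ ∧ i₁ = i₂ := by
  have ht : 0 < t := by omega
  have hdivmod : ∀ q i, i < t → (q * t + i) / t = q ∧ (q * t + i) % t = i := fun q i hi =>
    (Nat.div_mod_unique ht).2 ⟨by ring, hi⟩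
  obtain ⟨hq₁, hr₁⟩ := hdivmod q₁ i₁ hi₁
  obtain ⟨hq₂, hr₂⟩ := hdivmod q₂ i₂ hi₂
  rw [h] at hq₁ hr₁
  exact ⟨hq₁.symm.trans hq₂, hr₁.symm.trans hr₂⟩

def thetaReducedLength (t s₁ s₂ : ℕ) (p : {i : ℕ // 1 ≤ i ∧ i ≤ s₂ * t} × Fin 3) : ℕ :=
  s₁ * t + (p.2 : ℕ) * (s₂ * t) + p.1

def bCycleReducedLength (t k s₁ s₂ : ℕ)
    (p : {i : ℕ // 1 ≤ i ∧ i ≤ t} × {jh : ℕ × ℕ // 1 ≤ jh.1 ∧ jh.1 + jh.2 ≤ k + 1}) : ℕ :=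
  s₁ * t + 3 * (s₂ * t) + (p.2.val.2 * (k + 1) + (p.2.val.1 - 1)) * t + p.1

def thm5ReducedLengths (t k s₁ s₂ : ℕ) :
    (({i : ℕ // 1 ≤ i ∧ i ≤ s₂ * t} × Fin 3) ⊕
     {i : ℕ // 1 ≤ i ∧ i ≤ s₁ * t} ⊕
     ({i : ℕ // 1 ≤ i ∧ i ≤ t} × {jh : ℕ × ℕ // 1 ≤ jh.1 ∧ jh.1 + jh.2 ≤ k + 1})) → ℕ :=
  Sum.elim (thetaReducedLength t s₁ s₂) (Sum.elim Subtype.val (bCycleReducedLength t k s₁ s₂))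

section ReducedLengths

variable {t k s₁ s₂ : ℕ}

theorem thetaReducedLength_mem_Ioc (p : {i : ℕ // 1 ≤ i ∧ i ≤ s₂ * t} × Fin 3) :
    thetaReducedLength t s₁ s₂ p ∈ Set.Ioc (s₁ * t) (s₁ * t + 3 * (s₂ * t)) := by
  obtain ⟨⟨i, hi⟩, r⟩ := p
  have hr : (r : ℕ) * (s₂ * t) ≤ 2 * (s₂ * t) := Nat.mul_le_mul_right _ (by omega)
  simp only [thetaReducedLength, Set.mem_Ioc]
  omega

theorem lt_bCycleReducedLength
    (p : {i : ℕ // 1 ≤ i ∧ i ≤ t} × {jh : ℕ × ℕ // 1 ≤ jh.1 ∧ jh.1 + jh.2 ≤ k + 1}) :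
    s₁ * t + 3 * (s₂ * t) < bCycleReducedLength t k s₁ s₂ p := by
  have := p.1.2.1
  unfold bCycleReducedLength
  omega

theorem thetaReducedLength_injective : Function.Injective (thetaReducedLength t s₁ s₂) := by
  rintro ⟨⟨i₁, hi₁⟩, r₁⟩ ⟨⟨i₂, hi₂⟩, r₂⟩ heq
  obtain ⟨hr, hi⟩ := Nat.eq_and_eq_of_mul_add_eq_mul_add (t := s₂ * t)
    (q₁ := r₁) (q₂ := r₂) (i₁ := i₁ - 1) (i₂ := i₂ - 1) (by omega) (by omega)
    (by dsimp only [thetaReducedLength] at heq; omega)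
  simp only [Prod.mk.injEq, Subtype.mk.injEq]
  exact ⟨by omega, Fin.ext hr⟩

theorem bCycleReducedLength_injective : Function.Injective (bCycleReducedLength t k s₁ s₂) := by
  rintro ⟨⟨i₁, hi₁⟩, ⟨⟨j₁, h₁⟩, hjh₁⟩⟩ ⟨⟨i₂, hi₂⟩, ⟨⟨j₂, h₂⟩, hjh₂⟩⟩ heq
  obtain ⟨hdigits, hi⟩ := Nat.eq_and_eq_of_mul_add_eq_mul_add (t := t)
    (q₁ := h₁ * (k + 1) + (j₁ - 1)) (q₂ := h₂ * (k + 1) + (j₂ - 1))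
    (i₁ := i₁ - 1) (i₂ := i₂ - 1) (by omega) (by omega)
    (by dsimp only [bCycleReducedLength] at heq; omega)
  obtain ⟨hh, hj⟩ := Nat.eq_and_eq_of_mul_add_eq_mul_add (by omega) (by omega) hdigits
  simp only [Prod.mk.injEq, Subtype.mk.injEq]
  exact ⟨by omega, by omega, hh⟩

theorem thm5ReducedLengths_injective : Function.Injective (thm5ReducedLengths t k s₁ s₂) := by
  refine thetaReducedLength_injective.sumElim
    (Subtype.val_injective.sumElim bCycleReducedLength_injective ?_) ?_
  · intro i p
    have := lt_bCycleReducedLength (s₁ := s₁) (s₂ := s₂) p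
    have := i.2.2
    omega
  · rintro p (i | p')
    · have := thetaReducedLength_mem_Ioc (s₁ := s₁) p
      have := i.2.2
      simp only [Set.mem_Ioc, Sum.elim_inl] at *
      omega
    · have := thetaReducedLength_mem_Ioc (s₁ := s₁) p
      have := lt_bCycleReducedLength (s₁ := s₁) (s₂ := s₂) p'
      simp only [Set.mem_Ioc, Sum.elim_inr] at *
      omega

end ReducedLengths

theorem thm5Lengths_eq_mul (m t k s₁ s₂ : ℕ) :
    thm5Lengths m t k s₁ s₂ = fun x => m * thm5ReducedLengths t k s₁ s₂ x := by
  funext x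
  rcases x with ⟨i, r⟩ | i | ⟨i, ⟨⟨j, h⟩, hjh⟩⟩
  · fin_cases r <;>
      simp [thm5Lengths, thm5ReducedLengths, thetaReducedLength, mul_assoc]
  · rfl
  · obtain ⟨j, rfl⟩ : ∃ j', j = j' + 1 := ⟨j - 1, by omega⟩
    simp only [thm5Lengths, thm5ReducedLengths, bCycleReducedLength, Sum.elim_inr,
      Nat.add_sub_cancel, ← add_assoc]
    ring

theorem stmt15_general (m t k s₁ s₂ : ℕ) (hmpos : 0 < m) :
    Function.Injective (thm5Lengths m t k s₁ s₂) := by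
  rw [thm5Lengths_eq_mul]
  exact (mul_right_injective₀ hmpos.ne').comp thm5ReducedLengths_injective

theorem stmt15 (m t k s₁ s₂ : ℕ) (hm : Even m) (hmpos : 0 < m)
    (hs₂ : 0 < s₂) (hs : s₂ < s₁) (hkpos : 0 < k) (hk : k < s₁ + 3 * s₂) (ht : 1 ≤ t) :
    Function.Injective (thm5Lengths m t k s₁ s₂) :=
  stmt15_general m t k s₁ s₂ hmpos
end
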